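/- arXiv:1008.3628 — 3 statements merged into one kernel-verified Lean document; each statement's English description precedes it below -/
import Mathlib

section
/- For every u ∈ U, Q^a(u) = A_F ‖Du‖²_{ℓ²ε} + ε² B_F ‖D²u‖²_{ℓ²ε} + ε⁴ C_F ‖D³u‖²_{ℓ²ε} + ε⁶ D_F ‖D⁴u‖²_{ℓ²ε}. -/
open Finset

noncomputable section

/-- `u` is `2N`-periodic. -/
def IsPer (N : ℤ) (u : ℤ → ℝ) : Prop := ∀ ℓ : ℤ, u (ℓ + 2*N) = u ℓ

/-- `u` belongs to the displacement space `U`: `2N`-periodic with zero mean. -/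
def InU (N : ℤ) (u : ℤ → ℝ) : Prop :=
  IsPer N u ∧ ∑ ℓ ∈ Finset.Icc (-N+1) N, u ℓ = 0

/-- the scaled reference atomic spacing `ε = 1/N`. -/
def eps (N : ℤ) : ℝ := 1 / (N : ℝ)

/-- discrete derivative `(Dv)_ℓ = (v_ℓ - v_{ℓ-1})/ε`. -/
def Dd (N : ℤ) (v : ℤ → ℝ) : ℤ → ℝ := fun ℓ => (v ℓ - v (ℓ-1)) / eps N

/-- squared `ℓ²ε` norm: `ε Σ_{ℓ=-N+1}^{N} v_ℓ²`. -/
def nrm2 (N : ℤ) (v : ℤ → ℝ) : ℝ := eps N * ∑ ℓ ∈ Finset.Icc (-N+1) N, (v ℓ)^2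

/-- the atomistic second-variation quadratic form `Q^a`. -/
def Qa (N : ℤ) (pF p2F rF r2F rrF rr2F g1 g2 : ℝ) (u : ℤ → ℝ) : ℝ :=
  eps N * ∑ ℓ ∈ Finset.Icc (-N+1) N,
    (g2 * (rF * (Dd N u ℓ + Dd N u (ℓ+1))
        + r2F * (Dd N u (ℓ-1) + Dd N u ℓ + Dd N u (ℓ+1) + Dd N u (ℓ+2)))^2
     + g1 * (rrF * (Dd N u ℓ)^2 + rr2F * (Dd N u ℓ + Dd N u (ℓ-1))^2
           + rrF * (Dd N u (ℓ+1))^2 + rr2F * (Dd N u (ℓ+1) + Dd N u (ℓ+2))^2)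
     + (1/2) * (pF * ((Dd N u ℓ)^2 + (Dd N u (ℓ+1))^2)
           + p2F * ((Dd N u ℓ + Dd N u (ℓ-1))^2 + (Dd N u (ℓ+1) + Dd N u (ℓ+2))^2)))

/-- `Ã_F = φ''_F + 4φ''_{2F}`. -/
def Atil (pF p2F : ℝ) : ℝ := pF + 4*p2F

/-- `Â_F = 4G''_F(ρ'_F+2ρ'_{2F})² + 2G'_F(ρ''_F+4ρ''_{2F})`. -/
def Ahat (rF r2F rrF rr2F g1 g2 : ℝ) : ℝ := 4*g2*(rF + 2*r2F)^2 + 2*g1*(rrF + 4*rr2F)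

/-- `A_F = Â_F + Ã_F`. -/
def AFc (pF p2F rF r2F rrF rr2F g1 g2 : ℝ) : ℝ := Ahat rF r2F rrF rr2F g1 g2 + Atil pF p2F

/-- `B_F`. -/
def BFc (p2F rF r2F rr2F g1 g2 : ℝ) : ℝ :=
  -(p2F + g2*(rF^2 + 20*r2F^2 + 12*rF*r2F) + 2*g1*rr2F)

/-- `C_F`. -/
def CFc (rF r2F g2 : ℝ) : ℝ := g2*(8*r2F^2 + 2*rF*r2F)

/-- `D_F`. -/
def DFc (r2F g2 : ℝ) : ℝ := -(g2*r2F^2)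

/-- `λ_F(s) = A_F + B_F s + C_F s² + D_F s³`. -/
def lamF (pF p2F rF r2F rrF rr2F g1 g2 s : ℝ) : ℝ :=
  AFc pF p2F rF r2F rrF rr2F g1 g2 + BFc p2F rF r2F rr2F g1 g2 * s
    + CFc rF r2F g2 * s^2 + DFc r2F g2 * s^3

/-! With `v = Du`, every term of `Q^a` and every `‖Dᵏu‖²` is a sum over one period of the
square of a four-point stencil applied to `v` (after rescaling by `N = 1/ε`). By periodicity
such a sum depends only on the autocorrelations `R_m = Σ_ℓ v_ℓ v_{ℓ+m}`, `m = 0, …, 3`,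
so the identity reduces to comparing the coefficients of `R_0, …, R_3`. -/

open Function

namespace Function.Periodic

variable {M : Type*} [AddCancelCommMonoid M] {f : ℤ → M} {p : ℤ}

theorem sum_Ioc_comp_add_one (hf : Periodic f p) (a : ℤ) :
    ∑ ℓ ∈ Ioc a (a + p), f (ℓ + 1) = ∑ ℓ ∈ Ioc a (a + p), f ℓ := by
  rcases lt_or_ge p 0 with hp | hp
  · rw [Ioc_eq_empty (by omega), sum_empty, sum_empty]
  have hshift : ∑ ℓ ∈ Ioc a (a + p), f (ℓ + 1) = ∑ ℓ ∈ Ioc (a + 1) (a + p + 1), f ℓ := by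
    rw [← map_add_right_Ioc, sum_map]; rfl
  have htop := sum_insert (f := f) (s := Ioc a (a + p)) (a := a + p + 1) (by simp)
  have hbot := sum_insert (f := f) (s := Ioc (a + 1) (a + p + 1)) (a := a + 1) (by simp)
  rw [insert_Ioc_right_eq_Ioc_add_one (by omega)] at htop
  have hwrap : f (a + p + 1) = f (a + 1) := by rw [add_right_comm]; exact hf _
  rw [insert_Ioc_add_one_left_eq_Ioc (by omega), htop, hwrap] at hbot
  rw [hshift]
  exact (add_left_cancel hbot).symm

theorem sum_Ioc_comp_add (hf : Periodic f p) (a c : ℤ) :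
    ∑ ℓ ∈ Ioc a (a + p), f (ℓ + c) = ∑ ℓ ∈ Ioc a (a + p), f ℓ := by
  induction c using Int.induction_on with
  | zero => simp
  | succ k ih =>
    rw [← ih, ← (hf.add_const k).sum_Ioc_comp_add_one]
    simp only [add_right_comm _ (1 : ℤ), add_assoc]
  | pred k ih =>
    rw [← ih, ← (hf.add_const (-k - 1)).sum_Ioc_comp_add_one]
    simp only [add_assoc, add_sub_cancel]

end Function.Periodic

theorem Dd_apply (N : ℤ) (w : ℤ → ℝ) (ℓ : ℤ) : Dd N w ℓ = N * (w ℓ - w (ℓ - 1)) := by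
  rw [Dd, eps, div_div_eq_mul_div, div_one, mul_comm]

theorem periodic_Dd {w : ℤ → ℝ} {p : ℤ} (hw : Periodic w p) (N : ℤ) :
    Periodic (Dd N w) p := fun ℓ => by
  simp only [Dd_apply, hw ℓ, add_sub_right_comm, hw (ℓ - 1)]

def autocorr (a p : ℤ) (v : ℤ → ℝ) (m : ℤ) : ℝ := ∑ ℓ ∈ Ioc a (a + p), v ℓ * v (ℓ + m)

def stencil (v : ℤ → ℝ) (α β γ δ : ℝ) (ℓ : ℤ) : ℝ :=
  α * v (ℓ - 1) + β * v ℓ + γ * v (ℓ + 1) + δ * v (ℓ + 2)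

namespace Function.Periodic

variable {v : ℤ → ℝ} {p : ℤ}

theorem sum_mul_comp_add (hv : Periodic v p) (a c m : ℤ) :
    ∑ ℓ ∈ Ioc a (a + p), v (ℓ + c) * v (ℓ + c + m) = autocorr a p v m :=
  (hv.mul (hv.add_const m)).sum_Ioc_comp_add a c

theorem sum_stencil_sq (hv : Periodic v p) (a : ℤ) (α β γ δ : ℝ) :
    ∑ ℓ ∈ Ioc a (a + p), stencil v α β γ δ ℓ ^ 2
      = (α ^ 2 + β ^ 2 + γ ^ 2 + δ ^ 2) * autocorr a p v 0
        + 2 * (α * β + β * γ + γ * δ) * autocorr a p v 1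
        + 2 * (α * γ + β * δ) * autocorr a p v 2 + 2 * (α * δ) * autocorr a p v 3 := by
  -- every product is written as `v (ℓ + c) * v (ℓ + c + m)`, the shape of `sum_mul_comp_add`
  have hexpand : ∀ ℓ, stencil v α β γ δ ℓ ^ 2
      = α ^ 2 * (v (ℓ + -1) * v (ℓ + -1 + 0)) + β ^ 2 * (v (ℓ + 0) * v (ℓ + 0 + 0))
        + γ ^ 2 * (v (ℓ + 1) * v (ℓ + 1 + 0)) + δ ^ 2 * (v (ℓ + 2) * v (ℓ + 2 + 0))
        + 2 * α * β * (v (ℓ + -1) * v (ℓ + -1 + 1)) + 2 * β * γ * (v (ℓ + 0) * v (ℓ + 0 + 1))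
        + 2 * γ * δ * (v (ℓ + 1) * v (ℓ + 1 + 1)) + 2 * α * γ * (v (ℓ + -1) * v (ℓ + -1 + 2))
        + 2 * β * δ * (v (ℓ + 0) * v (ℓ + 0 + 2)) + 2 * α * δ * (v (ℓ + -1) * v (ℓ + -1 + 3)) := by
    intro ℓ
    simp only [stencil]
    ring_nf
  simp only [hexpand, sum_add_distrib, ← mul_sum, hv.sum_mul_comp_add]
  ring

theorem sum_sq_Dd (hv : Periodic v p) (N a : ℤ) :
    ∑ ℓ ∈ Ioc a (a + p), Dd N v ℓ ^ 2
      = (N : ℝ) ^ 2 * (2 * autocorr a p v 0 - 2 * autocorr a p v 1) := by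
  have hstencil : ∀ ℓ, Dd N v ℓ ^ 2 = (N : ℝ) ^ 2 * stencil v (-1) 1 0 0 ℓ ^ 2 := fun ℓ => by
    simp only [Dd_apply, stencil]; ring
  simp only [hstencil, ← mul_sum, hv.sum_stencil_sq]
  ring

theorem sum_sq_Dd_Dd (hv : Periodic v p) (N a : ℤ) :
    ∑ ℓ ∈ Ioc a (a + p), Dd N (Dd N v) ℓ ^ 2
      = (N : ℝ) ^ 4 * (6 * autocorr a p v 0 - 8 * autocorr a p v 1 + 2 * autocorr a p v 2) := by
  have hstencil : ∀ ℓ, Dd N (Dd N v) (ℓ + 1) ^ 2 = (N : ℝ) ^ 4 * stencil v 1 (-2) 1 0 ℓ ^ 2 :=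
    fun ℓ => by simp only [Dd_apply, stencil]; ring_nf
  rw [← sum_Ioc_comp_add (f := fun ℓ => Dd N (Dd N v) ℓ ^ 2)
    ((periodic_Dd (periodic_Dd hv N) N).comp (· ^ 2)) a 1]
  simp only [hstencil, ← mul_sum, hv.sum_stencil_sq]
  ring

theorem sum_sq_Dd_Dd_Dd (hv : Periodic v p) (N a : ℤ) :
    ∑ ℓ ∈ Ioc a (a + p), Dd N (Dd N (Dd N v)) ℓ ^ 2
      = (N : ℝ) ^ 6 * (20 * autocorr a p v 0 - 30 * autocorr a p v 1
          + 12 * autocorr a p v 2 - 2 * autocorr a p v 3) := by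
  have hstencil : ∀ ℓ, Dd N (Dd N (Dd N v)) (ℓ + 2) ^ 2
      = (N : ℝ) ^ 6 * stencil v (-1) 3 (-3) 1 ℓ ^ 2 :=
    fun ℓ => by simp only [Dd_apply, stencil]; ring_nf
  rw [← sum_Ioc_comp_add (f := fun ℓ => Dd N (Dd N (Dd N v)) ℓ ^ 2)
    ((periodic_Dd (periodic_Dd (periodic_Dd hv N) N) N).comp (· ^ 2)) a 2]
  simp only [hstencil, ← mul_sum, hv.sum_stencil_sq]
  ring

end Function.Periodic

theorem Icc_neg_add_one_eq_Ioc (N : ℤ) : Icc (-N + 1) N = Ioc (-N) (-N + 2 * N) := by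
  rw [Icc_add_one_left_eq_Ioc]; congr 1; ring

theorem Qa_eq_autocorr {N : ℤ} {u : ℤ → ℝ} (hu : Periodic u (2 * N))
    (pF p2F rF r2F rrF rr2F g1 g2 : ℝ) :
    Qa N pF p2F rF r2F rrF rr2F g1 g2 u
      = eps N * ((2 * g2 * r2F ^ 2 + 2 * g2 * (rF + r2F) ^ 2 + 2 * g1 * (rrF + 2 * rr2F)
            + pF + 2 * p2F) * autocorr (-N) (2 * N) (Dd N u) 0
          + (2 * g2 * (rF + r2F) ^ 2 + 4 * g2 * (rF + r2F) * r2F + 4 * g1 * rr2F + 2 * p2F)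
            * autocorr (-N) (2 * N) (Dd N u) 1
          + 4 * g2 * (rF + r2F) * r2F * autocorr (-N) (2 * N) (Dd N u) 2
          + 2 * g2 * r2F ^ 2 * autocorr (-N) (2 * N) (Dd N u) 3) := by
  have hv := periodic_Dd hu N
  rw [Qa, Icc_neg_add_one_eq_Ioc]
  congr 1
  calc _ = ∑ ℓ ∈ Ioc (-N) (-N + 2 * N),
        (g2 * stencil (Dd N u) r2F (rF + r2F) (rF + r2F) r2F ℓ ^ 2
          + (g1 * rrF + pF / 2) * (stencil (Dd N u) 0 1 0 0 ℓ ^ 2 + stencil (Dd N u) 0 0 1 0 ℓ ^ 2)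
          + (g1 * rr2F + p2F / 2) * (stencil (Dd N u) 1 1 0 0 ℓ ^ 2
            + stencil (Dd N u) 0 0 1 1 ℓ ^ 2)) :=
        sum_congr rfl fun ℓ _ => by simp only [stencil]; ring
    _ = _ := by
        simp only [mul_add, sum_add_distrib, ← mul_sum, hv.sum_stencil_sq]
        ring

theorem Qa_representation_general (N : ℤ)
    (pF p2F rF r2F rrF rr2F g1 g2 : ℝ) (u : ℤ → ℝ) (hu : InU N u) :
    Qa N pF p2F rF r2F rrF rr2F g1 g2 u
    = AFc pF p2F rF r2F rrF rr2F g1 g2 * nrm2 N (Dd N u)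
      + (eps N)^2 * BFc p2F rF r2F rr2F g1 g2 * nrm2 N (Dd N (Dd N u))
      + (eps N)^4 * CFc rF r2F g2 * nrm2 N (Dd N (Dd N (Dd N u)))
      + (eps N)^6 * DFc r2F g2 * nrm2 N (Dd N (Dd N (Dd N (Dd N u)))) := by
  have hper : Periodic u (2 * N) := hu.1
  have hv := periodic_Dd hper N
  have hnorm : ∑ ℓ ∈ Ioc (-N) (-N + 2 * N), Dd N u ℓ ^ 2 = autocorr (-N) (2 * N) (Dd N u) 0 := by
    simp only [autocorr, add_zero, sq]
  rw [Qa_eq_autocorr hper]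
  simp only [nrm2, Icc_neg_add_one_eq_Ioc, hnorm, hv.sum_sq_Dd, hv.sum_sq_Dd_Dd, hv.sum_sq_Dd_Dd_Dd]
  simp only [AFc, Ahat, Atil, BFc, CFc, DFc, eps]
  field_simp
  ring

/-- the Fourier-ready representation of `Q^a`. -/
theorem Qa_representation (N : ℤ) (hN : 1 ≤ N)
    (pF p2F rF r2F rrF rr2F g1 g2 : ℝ) (u : ℤ → ℝ) (hu : InU N u) :
    Qa N pF p2F rF r2F rrF rr2F g1 g2 u
    = AFc pF p2F rF r2F rrF rr2F g1 g2 * nrm2 N (Dd N u)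
      + (eps N)^2 * BFc p2F rF r2F rr2F g1 g2 * nrm2 N (Dd N (Dd N u))
      + (eps N)^4 * CFc rF r2F g2 * nrm2 N (Dd N (Dd N (Dd N u)))
      + (eps N)^6 * DFc r2F g2 * nrm2 N (Dd N (Dd N (Dd N (Dd N u)))) :=
  Qa_representation_general N pF p2F rF r2F rrF rr2F g1 g2 u hu
end
end

section
/- For every u ∈ U: Q^a(u) ≥ λ_F(4 sin²(π/(2N))) · ‖Du‖²_{ℓ²ε}; moreover λ_F(4 sin²(π/(2N))) ≥ A_F. -/
/-!
Write `g = Du`, viewed as a zero-mean function on `ℤ/2Nℤ`. The density of `Q^a` is a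
combination of squares of the stencils `h_ℓ = g_ℓ + g_{ℓ-1}` and
`ρ'_F h_{ℓ+1} + ρ'_{2F} (h_ℓ + h_{ℓ+2})`, so Plancherel for the discrete Fourier transform gives
`2N · Q^a(u) / ε = Σ_k |ĝ_k|² λ_F(2 - 2 cos(2πk/2N))`. Under (H1) and (H2) the cubic `λ_F` is
nondecreasing on `[0, 4]`; moreover `ĝ_0 = 0`, and every other frequency has
`2 - 2 cos(2πk/2N) ∈ [4 sin²(π/2N), 4]`. Comparing termwise with Plancherel for `g` gives the
bound, and `λ_F(0) = A_F` gives the comparison with `A_F`.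
-/

open Finset

noncomputable section

open ZMod Real

lemma sum_comp_add_right {G M : Type*} [AddGroup G] [Fintype G] [AddCommMonoid M] (f : G → M)
    (a : G) : ∑ x, f (x + a) = ∑ x, f x :=
  Equiv.sum_comp (Equiv.addRight a) f

lemma cubic_monotoneOn {a b c d : ℝ} (hb : 0 ≤ b) (hb4 : 0 ≤ b + 8 * c + 48 * d)
    (hd : d ≤ 0) :
    MonotoneOn (fun s ↦ a + b * s + c * s ^ 2 + d * s ^ 3) (Set.Icc 0 4) := by
  rintro s ⟨hs0, hs4⟩ t ⟨ht0, ht4⟩ hst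
  have hq : t ^ 2 + t * s + s ^ 2 ≤ 6 * (t + s) := by nlinarith
  -- the difference quotient is at least `b + (c + 6d)(s + t)`, affine in `s + t ∈ [0, 8]`
  have hM : 0 ≤ b + c * (t + s) + d * (t ^ 2 + t * s + s ^ 2) := by
    nlinarith [mul_nonneg (by linarith : (0 : ℝ) ≤ 8 - (t + s)) hb,
      mul_nonneg (add_nonneg ht0 hs0) hb4, mul_nonneg (neg_nonneg.2 hd) (sub_nonneg.2 hq)]
  have hdiff : a + b * t + c * t ^ 2 + d * t ^ 3 - (a + b * s + c * s ^ 2 + d * s ^ 3)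
      = (t - s) * (b + c * (t + s) + d * (t ^ 2 + t * s + s ^ 2)) := by ring
  nlinarith [mul_nonneg (sub_nonneg.2 hst) hM]

lemma lamF_monotoneOn {pF p2F rF r2F rrF rr2F g1 g2 : ℝ} (hrF : rF ≤ 0) (hr2F : r2F ≤ 0)
    (hg2 : 0 ≤ g2) (hB : 0 ≤ BFc p2F rF r2F rr2F g1 g2) :
    MonotoneOn (lamF pF p2F rF r2F rrF rr2F g1 g2) (Set.Icc 0 4) := by
  have hB4 : BFc p2F rF r2F rr2F g1 g2 + 8 * CFc rF r2F g2 + 48 * DFc r2F g2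
      = BFc p2F rF r2F rr2F g1 g2 + 16 * g2 * (r2F ^ 2 + rF * r2F) := by
    simp only [CFc, DFc]; ring
  have hD : DFc r2F g2 ≤ 0 := by simp only [DFc]; nlinarith [mul_nonneg hg2 (sq_nonneg r2F)]
  refine cubic_monotoneOn hB (hB4 ▸ ?_) hD
  have := mul_nonneg_of_nonpos_of_nonpos hrF hr2F
  positivity

lemma cos_le_cos_two_pi_div {n m : ℕ} (hm : 1 ≤ m) (hmn : m < n) :
    cos (2 * π * m / n) ≤ cos (2 * π / n) := by
  have hn : (0 : ℝ) < n := by exact_mod_cast (by omega : 0 < n)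
  have hm1 : (1 : ℝ) ≤ m := by exact_mod_cast hm
  have hmn' : (m : ℝ) + 1 ≤ n := by exact_mod_cast hmn
  rcases le_total (2 * m) n with h2 | h2
  · have h2' : 2 * (m : ℝ) ≤ n := by exact_mod_cast h2
    apply cos_le_cos_of_nonneg_of_le_pi (by positivity)
    · rw [div_le_iff₀ hn]; nlinarith [pi_pos]
    · exact div_le_div_of_nonneg_right (by nlinarith [pi_pos]) hn.le
  · have h2' : (n : ℝ) ≤ 2 * m := by exact_mod_cast h2
    rw [← cos_two_pi_sub, show 2 * π - 2 * π * m / n = 2 * π * (n - m) / n by field_simp]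
    apply cos_le_cos_of_nonneg_of_le_pi (by positivity)
    · rw [div_le_iff₀ hn]; nlinarith [pi_pos]
    · exact div_le_div_of_nonneg_right (by nlinarith [pi_pos]) hn.le

lemma Complex.normSq_mul_add_mul_one_add_sq {z : ℂ} (hz : normSq z = 1) (p q : ℝ) :
    normSq (p * z + q * (1 + z ^ 2)) = (p + 2 * q * z.re) ^ 2 := by
  have hzz : z * (starRingEnd ℂ) z = 1 := by rw [mul_conj, hz, ofReal_one]
  have : (p * z + q * (1 + z ^ 2) : ℂ) = z * ((p + 2 * q * z.re : ℝ) : ℂ) := by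
    push_cast; rw [re_eq_add_conj]
    linear_combination (-(q : ℂ)) * hzz
  rw [this, normSq_mul, hz, normSq_ofReal]; ring

/-- The summand of `Qa` at site `ℓ`, in terms of
`(a, b, c, d) = (Du_{ℓ-1}, Du_ℓ, Du_{ℓ+1}, Du_{ℓ+2})`. -/
def qaDensity (pF p2F rF r2F rrF rr2F g1 g2 a b c d : ℝ) : ℝ :=
  g2 * (rF * (b + c) + r2F * (a + b + c + d)) ^ 2
    + g1 * (rrF * b ^ 2 + rr2F * (b + a) ^ 2 + rrF * c ^ 2 + rr2F * (c + d) ^ 2)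
    + (1 / 2) * (pF * (b ^ 2 + c ^ 2) + p2F * ((b + a) ^ 2 + (c + d) ^ 2))

namespace ZMod

variable {n : ℕ} [NeZero n]

lemma dft_add_apply (Φ Ψ : ZMod n → ℂ) (k : ZMod n) :
    𝓕 (fun j ↦ Φ j + Ψ j) k = 𝓕 Φ k + 𝓕 Ψ k := by
  simp only [dft_apply, smul_add, sum_add_distrib]

lemma dft_comp_add_right_apply (Φ : ZMod n → ℂ) (a k : ZMod n) :
    𝓕 (fun j ↦ Φ (j + a)) k = stdAddChar (a * k) * 𝓕 Φ k := by
  simp only [dft_apply, smul_eq_mul, mul_sum]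
  refine Fintype.sum_equiv (Equiv.addRight a) _ _ fun j ↦ ?_
  rw [Equiv.coe_addRight, ← mul_assoc, ← AddChar.map_add_eq_mul]
  ring_nf

lemma sum_normSq_dft (Φ : ZMod n → ℂ) :
    ∑ k, Complex.normSq (𝓕 Φ k) = n * ∑ j, Complex.normSq (Φ j) := by
  apply Complex.ofReal_injective
  push_cast
  simp_rw [← Complex.mul_conj, dft_apply, smul_eq_mul, map_sum, map_mul, sum_mul_sum,
    ← AddChar.map_neg_eq_conj, neg_neg]
  have horth : ∀ i j : ZMod n, ∑ k : ZMod n, stdAddChar (-(i * k)) * stdAddChar (j * k)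
      = if j - i = 0 then (n : ℂ) else 0 := by
    intro i j
    simp_rw [← AddChar.map_add_eq_mul, show ∀ k : ZMod n, -(i * k) + j * k = k * (j - i) by
      intro k; ring]
    rw [AddChar.sum_mulShift _ (isPrimitive_stdAddChar n), ZMod.card]
    push_cast; rfl
  calc ∑ k, ∑ i, ∑ j,
        stdAddChar (-(i * k)) * Φ i * (stdAddChar (j * k) * (starRingEnd ℂ) (Φ j))
      = ∑ i, ∑ j, Φ i * (starRingEnd ℂ) (Φ j) *
          ∑ k : ZMod n, stdAddChar (-(i * k)) * stdAddChar (j * k) := by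
        rw [sum_comm]; refine sum_congr rfl fun i _ ↦ ?_
        rw [sum_comm]; refine sum_congr rfl fun j _ ↦ ?_
        rw [mul_sum]; refine sum_congr rfl fun k _ ↦ ?_
        ring
    _ = n * ∑ j, Φ j * (starRingEnd ℂ) (Φ j) := by
        simp_rw [horth, sub_eq_zero, mul_ite, mul_zero, sum_ite_eq', mem_univ, if_true, mul_sum]
        exact sum_congr rfl fun _ _ ↦ by ring

lemma card_mul_sum_sq_eq_sum_normSq_dft (f : ZMod n → ℝ) :
    n * ∑ x, f x ^ 2 = ∑ k, Complex.normSq (𝓕 (fun x ↦ (f x : ℂ)) k) := by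
  simp [sum_normSq_dft, Complex.normSq_ofReal, sq]

lemma normSq_stdAddChar (k : ZMod n) : Complex.normSq (stdAddChar k) = 1 := by
  rw [Complex.normSq_eq_norm_sq, AddChar.norm_apply, one_pow]

lemma normSq_one_add_stdAddChar_neg (k : ZMod n) :
    Complex.normSq (1 + stdAddChar (-k)) = 2 + 2 * (stdAddChar k).re := by
  have h := normSq_stdAddChar k
  rw [AddChar.map_neg_eq_conj, Complex.normSq_apply] at *
  simp only [Complex.add_re, Complex.one_re, Complex.conj_re, Complex.add_im, Complex.one_im,
    Complex.conj_im] at *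
  linear_combination h

lemma two_sub_two_re_stdAddChar_le_four (k : ZMod n) : 2 - 2 * (stdAddChar k).re ≤ 4 := by
  have := abs_le.1 ((Complex.abs_re_le_norm _).trans_eq (AddChar.norm_apply stdAddChar k))
  linarith

lemma four_sin_sq_le_two_sub_two_re_stdAddChar {k : ZMod n} (hk : k ≠ 0) :
    4 * sin (π / n) ^ 2 ≤ 2 - 2 * (stdAddChar k).re := by
  have hre : (stdAddChar k).re = cos (2 * π * k.val / n) := by
    rw [stdAddChar_apply, toCircle_apply, ← Complex.ofReal_natCast, ← Complex.ofReal_natCast,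
      show 2 * (π : ℂ) * Complex.I * (k.val : ℝ) / (n : ℝ)
        = ((2 * π * k.val / n : ℝ) : ℂ) * Complex.I by push_cast; ring,
      Complex.exp_ofReal_mul_I_re]
  have hcos := cos_le_cos_two_pi_div (Nat.one_le_iff_ne_zero.mpr ((val_ne_zero k).mpr hk))
    (val_lt k)
  have hhalf : cos (2 * π / n) = 1 - 2 * sin (π / n) ^ 2 := by
    rw [show 2 * π / n = 2 * (π / n) by ring, cos_two_mul, cos_sq']; ring
  rw [hre]; linarith

theorem card_mul_sum_qaDensity (pF p2F rF r2F rrF rr2F g1 g2 : ℝ) (g : ZMod n → ℝ) :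
    n * ∑ x, qaDensity pF p2F rF r2F rrF rr2F g1 g2 (g (x - 1)) (g x) (g (x + 1)) (g (x + 2))
      = ∑ k, Complex.normSq (𝓕 (fun x ↦ (g x : ℂ)) k)
          * lamF pF p2F rF r2F rrF rr2F g1 g2 (2 - 2 * (stdAddChar k).re) := by
  set q : ZMod n → ℝ := fun x ↦
    qaDensity pF p2F rF r2F rrF rr2F g1 g2 (g (x - 1)) (g x) (g (x + 1)) (g (x + 2)) with hq
  set h : ZMod n → ℝ := fun x ↦ g x + g (x - 1) with hh
  set S : ZMod n → ℝ := fun x ↦ rF * h (x + 1) + r2F * (h x + h (x + 2)) with hS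
  have hdens : ∀ x, q x
      = g2 * S x ^ 2 + (g1 * rrF + pF / 2) * (g x ^ 2 + g (x + 1) ^ 2)
        + (g1 * rr2F + p2F / 2) * (h x ^ 2 + h (x + 2) ^ 2) := by
    intro x
    simp only [hq, qaDensity, hS, hh, add_sub_cancel_right, show x + 2 - 1 = x + 1 by ring]
    ring
  have hsum : ∑ x, q x
      = g2 * ∑ x, S x ^ 2 + 2 * (g1 * rrF + pF / 2) * ∑ x, g x ^ 2
        + 2 * (g1 * rr2F + p2F / 2) * ∑ x, h x ^ 2 := by
    simp only [hdens, sum_add_distrib, ← mul_sum, sum_comp_add_right (fun x ↦ g x ^ 2),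
      sum_comp_add_right (fun x ↦ h x ^ 2)]
    ring
  have hdft_h : ∀ k, 𝓕 (fun x ↦ (h x : ℂ)) k
      = (1 + stdAddChar (-1 * k)) * 𝓕 (fun x ↦ (g x : ℂ)) k := by
    intro k
    simp only [hh, Complex.ofReal_add, sub_eq_add_neg, dft_add_apply,
      dft_comp_add_right_apply (fun x ↦ (g x : ℂ))]
    ring
  have hdft_S : ∀ k, 𝓕 (fun x ↦ (S x : ℂ)) k
      = (rF * stdAddChar (1 * k) + r2F * (1 + stdAddChar (2 * k)))
        * 𝓕 (fun x ↦ (h x : ℂ)) k := by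
    intro k
    simp only [hS, Complex.ofReal_add, Complex.ofReal_mul, dft_add_apply, dft_const_mul,
      dft_comp_add_right_apply (fun x ↦ (h x : ℂ))]
    ring
  rw [hsum, mul_add, mul_add, mul_left_comm, mul_left_comm _ (2 * _), mul_left_comm _ (2 * _),
    card_mul_sum_sq_eq_sum_normSq_dft, card_mul_sum_sq_eq_sum_normSq_dft,
    card_mul_sum_sq_eq_sum_normSq_dft, mul_sum, mul_sum, mul_sum, ← sum_add_distrib,
    ← sum_add_distrib]
  refine sum_congr rfl fun k _ ↦ ?_
  rw [hdft_S, hdft_h, Complex.normSq_mul, Complex.normSq_mul, one_mul, neg_one_mul, two_mul,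
    AddChar.map_add_eq_mul, ← sq,
    Complex.normSq_mul_add_mul_one_add_sq (normSq_stdAddChar k), normSq_one_add_stdAddChar_neg]
  simp only [lamF, AFc, Ahat, Atil, BFc, CFc, DFc]
  ring

theorem lamF_mul_sum_sq_le_sum_qaDensity {pF p2F rF r2F rrF rr2F g1 g2 : ℝ} (hrF : rF ≤ 0)
    (hr2F : r2F ≤ 0) (hg2 : 0 ≤ g2) (hB : 0 ≤ BFc p2F rF r2F rr2F g1 g2) {g : ZMod n → ℝ}
    (hg : ∑ x, g x = 0) :
    lamF pF p2F rF r2F rrF rr2F g1 g2 (4 * sin (π / n) ^ 2) * ∑ x, g x ^ 2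
      ≤ ∑ x, qaDensity pF p2F rF r2F rrF rr2F g1 g2
          (g (x - 1)) (g x) (g (x + 1)) (g (x + 2)) := by
  have hn : (0 : ℝ) < n := by exact_mod_cast Nat.pos_of_ne_zero (NeZero.ne n)
  have hs : 4 * sin (π / n) ^ 2 ∈ Set.Icc (0 : ℝ) 4 :=
    ⟨by positivity, by nlinarith [sin_sq_le_one (π / n)]⟩
  refine le_of_mul_le_mul_left ?_ hn
  rw [mul_left_comm, card_mul_sum_sq_eq_sum_normSq_dft, card_mul_sum_qaDensity, mul_sum]
  refine sum_le_sum fun k _ ↦ ?_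
  rcases eq_or_ne k 0 with rfl | hk
  · simp [dft_apply_zero, ← Complex.ofReal_sum, hg]
  · have hgap := four_sin_sq_le_two_sub_two_re_stdAddChar hk
    rw [mul_comm]
    exact mul_le_mul_of_nonneg_left (lamF_monotoneOn hrF hr2F hg2 hB hs
      ⟨hs.1.trans hgap, two_sub_two_re_stdAddChar_le_four k⟩ hgap) (Complex.normSq_nonneg _)

end ZMod

/-- A `2N`-periodic sequence as a function on `ZMod (2N)`; `valMinAbs` picks the representative
in `(-N, N]`, i.e. the index window of `Qa` and `nrm2`. -/
def onZMod (N : ℕ) (f : ℤ → ℝ) : ZMod (2 * N) → ℝ := fun x ↦ f x.valMinAbs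

lemma sum_Icc_eq_sum_zmod {N : ℕ} [NeZero N] {M : Type*} [AddCommMonoid M]
    (F : ZMod (2 * N) → M) : ∑ ℓ ∈ Icc (-(N : ℤ) + 1) N, F ℓ = ∑ x, F x := by
  refine sum_nbij' (fun ℓ ↦ (ℓ : ZMod (2 * N))) valMinAbs (fun _ _ ↦ mem_univ _)
    (fun x _ ↦ ?_) (fun ℓ hℓ ↦ ?_) (fun x _ ↦ coe_valMinAbs x) (fun _ _ ↦ rfl)
  · have := x.valMinAbs_mem_Ioc
    simp only [Set.mem_Ioc, Nat.cast_mul, Nat.cast_ofNat, mem_Icc] at this ⊢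
    omega
  · rw [mem_Icc] at hℓ
    rw [valMinAbs_spec]
    refine ⟨rfl, ?_⟩
    simp only [Set.mem_Ioc, Nat.cast_mul, Nat.cast_ofNat]
    omega

lemma IsPer.onZMod_intCast {N : ℕ} {f : ℤ → ℝ} (hf : IsPer N f) (ℓ : ℤ) :
    onZMod N f ℓ = f ℓ := by
  obtain ⟨c, hc⟩ :=
    (intCast_eq_intCast_iff_dvd_sub _ _ _).1 (coe_valMinAbs (ℓ : ZMod (2 * N)))
  have hper : Function.Periodic f (2 * N) := hf
  have hℓ : ℓ = (ℓ : ZMod (2 * N)).valMinAbs + c * (2 * N) := by push_cast at hc; linarith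
  conv_rhs => rw [hℓ]
  exact (hper.int_mul c _).symm

lemma IsPer.Dd {N : ℤ} {u : ℤ → ℝ} (hu : IsPer N u) : IsPer N (Dd N u) := by
  intro ℓ
  show (u (ℓ + 2 * N) - u (ℓ + 2 * N - 1)) / eps N = (u ℓ - u (ℓ - 1)) / eps N
  rw [hu ℓ, show ℓ + 2 * N - 1 = ℓ - 1 + 2 * N by ring, hu (ℓ - 1)]

lemma sum_onZMod_Dd {N : ℕ} [NeZero N] {u : ℤ → ℝ} (hu : IsPer N u) :
    ∑ x, onZMod N (Dd N u) x = 0 := by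
  have hD : ∀ x, onZMod N (Dd N u) x = (onZMod N u x - onZMod N u (x - 1)) / eps N := by
    intro x
    obtain ⟨ℓ, rfl⟩ := intCast_surjective x
    rw [hu.Dd.onZMod_intCast, hu.onZMod_intCast, ← Int.cast_one, ← Int.cast_sub,
      hu.onZMod_intCast]
    rfl
  have hshift := sum_comp_add_right (onZMod N u) (-1)
  simp only [← sub_eq_add_neg] at hshift
  rw [sum_congr rfl fun x _ ↦ hD x, ← sum_div, sum_sub_distrib, hshift, sub_self, zero_div]

lemma Qa_eq_eps_mul_sum_qaDensity {N : ℕ} [NeZero N] (pF p2F rF r2F rrF rr2F g1 g2 : ℝ)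
    {u : ℤ → ℝ} (hu : IsPer N u) :
    Qa N pF p2F rF r2F rrF rr2F g1 g2 u = eps N * ∑ x : ZMod (2 * N),
      qaDensity pF p2F rF r2F rrF rr2F g1 g2 (onZMod N (Dd N u) (x - 1)) (onZMod N (Dd N u) x)
        (onZMod N (Dd N u) (x + 1)) (onZMod N (Dd N u) (x + 2)) := by
  rw [Qa, ← sum_Icc_eq_sum_zmod]
  congr 1
  refine sum_congr rfl fun ℓ _ ↦ ?_
  have hD : ∀ c : ℤ, onZMod N (Dd N u) ((ℓ : ZMod (2 * N)) + c) = Dd N u (ℓ + c) := by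
    intro c
    rw [← hu.Dd.onZMod_intCast]; push_cast; rfl
  have hm1 := hD (-1)
  have hp1 := hD 1
  have hp2 := hD 2
  push_cast at hm1 hp1 hp2
  rw [← sub_eq_add_neg] at hm1
  rw [hm1, hp1, hp2, hu.Dd.onZMod_intCast]
  rfl

lemma nrm2_eq_eps_mul_sum_sq {N : ℕ} [NeZero N] {v : ℤ → ℝ} (hv : IsPer N v) :
    nrm2 N v = eps N * ∑ x : ZMod (2 * N), onZMod N v x ^ 2 := by
  simp only [nrm2, ← sum_Icc_eq_sum_zmod, hv.onZMod_intCast]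

theorem atomistic_stability_lower_bound_general (N : ℤ) (hN : 1 ≤ N)
    (pF p2F rF r2F rrF rr2F g1 g2 : ℝ)
    (hH1c : rF ≤ 0) (hH1d : r2F ≤ 0)
    (hH1g : 0 ≤ g2)
    (hH2 : 0 ≤ BFc p2F rF r2F rr2F g1 g2) :
    (∀ u : ℤ → ℝ, InU N u →
      lamF pF p2F rF r2F rrF rr2F g1 g2 (4 * Real.sin (Real.pi / (2*(N:ℝ)))^2)
          * nrm2 N (Dd N u)
        ≤ Qa N pF p2F rF r2F rrF rr2F g1 g2 u) ∧
    AFc pF p2F rF r2F rrF rr2F g1 g2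
      ≤ lamF pF p2F rF r2F rrF rr2F g1 g2 (4 * Real.sin (Real.pi / (2*(N:ℝ)))^2) := by
  lift N to ℕ using by omega
  have : NeZero N := ⟨by omega⟩
  have hs : 4 * sin (π / (2 * (N : ℝ))) ^ 2 ∈ Set.Icc (0 : ℝ) 4 :=
    ⟨by positivity, by nlinarith [sin_sq_le_one (π / (2 * (N : ℝ)))]⟩
  refine ⟨fun u hu ↦ ?_, ?_⟩
  · have key := ZMod.lamF_mul_sum_sq_le_sum_qaDensity (pF := pF) (p2F := p2F) (rrF := rrF)
      (rr2F := rr2F) hH1c hH1d hH1g hH2 (sum_onZMod_Dd hu.1)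
    push_cast at key
    rw [Qa_eq_eps_mul_sum_qaDensity _ _ _ _ _ _ _ _ hu.1, nrm2_eq_eps_mul_sum_sq hu.1.Dd,
      mul_left_comm]
    exact mul_le_mul_of_nonneg_left key (by rw [eps]; positivity)
  · have hA : lamF pF p2F rF r2F rrF rr2F g1 g2 0 = AFc pF p2F rF r2F rrF rr2F g1 g2 := by
      simp [lamF]
    exact hA ▸ lamF_monotoneOn hH1c hH1d hH1g hH2 ⟨le_rfl, by norm_num⟩ hs hs.1

/-- sharp lower bound for `Q^a` and comparison with `A_F`. -/
theorem atomistic_stability_lower_bound (N : ℤ) (hN : 1 ≤ N)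
    (pF p2F rF r2F rrF rr2F g1 g2 : ℝ)
    (hH1a : 0 < pF) (hH1b : p2F < 0) (hH1c : rF ≤ 0) (hH1d : r2F ≤ 0)
    (hH1e : 0 ≤ rrF) (hH1f : 0 ≤ rr2F) (hH1g : 0 ≤ g2)
    (hH2 : 0 ≤ BFc p2F rF r2F rr2F g1 g2) :
    (∀ u : ℤ → ℝ, InU N u →
      lamF pF p2F rF r2F rrF rr2F g1 g2 (4 * Real.sin (Real.pi / (2*(N:ℝ)))^2)
          * nrm2 N (Dd N u)
        ≤ Qa N pF p2F rF r2F rrF rr2F g1 g2 u) ∧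
    AFc pF p2F rF r2F rrF rr2F g1 g2
      ≤ lamF pF p2F rF r2F rrF rr2F g1 g2 (4 * Real.sin (Real.pi / (2*(N:ℝ)))^2) :=
  atomistic_stability_lower_bound_general N hN pF p2F rF r2F rrF rr2F g1 g2 hH1c hH1d hH1g hH2
end
end

section
/- If φ''_{2F} + G''_F(ρ'_F + 2ρ'_{2F})² + 2G'_F ρ''_{2F} > 0, then there exists u ∈ U with ‖Du‖²_{ℓ²ε} = 1 and Q^a(u) < A_F; indeed the sequence ũ_ℓ := (−1)^ℓ ε/(2√2) satisfies ũ ∈ U, ‖Dũ‖²_{ℓ²ε} = 1, and Q^a(ũ) = φ''_F + 2G'_F ρ''_F = A_F − 4[φ''_{2F} + G''_F(ρ'_F + 2ρ'_{2F})² + 2G'_F ρ''_{2F}] < A_F. (Thus the uniform deformation can be unstable for the atomistic model while stable for the local quasicontinuum model, whose second variation is A_F‖Du‖²_{ℓ²ε}.) -/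
/-!
The alternating displacement `ũ_ℓ = (-1)^ℓ ε/(2√2)` is antiperiodic with antiperiod one, hence
`2N`-periodic with zero mean, and its strains `Dũ_ℓ = (-1)^ℓ/√2` are antiperiodic as well. For an
antiperiodic strain field every second-neighbour strain `Du_ℓ + Du_{ℓ±1}` vanishes, so `Q^a` only
sees the nearest-neighbour moduli: `Q^a(ũ) = (φ''_F + 2G'_F ρ''_F) ‖Dũ‖²`. Expanding `A_F` shows
that it exceeds `φ''_F + 2G'_F ρ''_F` by four times the positive quantity of the hypothesis.
-/

open Finset

noncomputable section

theorem neg_one_zpow_sq {α : Type*} [DivisionRing α] (ℓ : ℤ) : ((-1 : α) ^ ℓ) ^ 2 = 1 := by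
  rw [← zpow_natCast, ← zpow_mul, mul_comm]
  exact (even_two_mul ℓ).neg_one_zpow

theorem antiperiodic_neg_one_zpow_mul {α : Type*} [DivisionRing α] (a : α) :
    Function.Antiperiodic (fun ℓ : ℤ => (-1 : α) ^ ℓ * a) 1 := by
  intro ℓ
  simp only [zpow_add_one₀ (neg_ne_zero.mpr one_ne_zero : (-1 : α) ≠ 0), mul_neg_one, neg_mul]

theorem card_Icc_neg_add_one (N : ℤ) (hN : 0 ≤ N) : ((Icc (-N + 1) N).card : ℝ) = 2 * N := by
  rw [Int.card_Icc, show N + 1 - (-N + 1) = 2 * N by ring, ← Int.cast_natCast,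
    Int.toNat_of_nonneg (by omega)]
  push_cast
  ring

namespace Function.Antiperiodic

variable {u : ℤ → ℝ}

theorem sum_Icc_neg_add_one_eq_zero {β : Type*} [AddCommGroup β] {v : ℤ → β}
    (hv : Antiperiodic v 1) (N : ℤ) : ∑ ℓ ∈ Icc (-N + 1) N, v ℓ = 0 := by
  -- `ℓ ↦ 1 - ℓ` pairs each site with one of opposite parity
  refine sum_involution (fun ℓ _ => 1 - ℓ) (fun ℓ _ => ?_) (fun ℓ _ _ => by omega)
    (fun ℓ hℓ => by simp only [mem_Icc] at hℓ ⊢; omega) (fun ℓ _ => by ring)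
  have h := hv.int_even_mul_periodic ℓ (1 - ℓ)
  rw [Int.cast_id, show 1 - ℓ + ℓ * (2 * 1) = ℓ + 1 by ring, hv] at h
  rw [← h, add_neg_cancel]

theorem inU (hu : Antiperiodic u 1) (N : ℤ) : InU N u := by
  refine ⟨fun ℓ => ?_, hu.sum_Icc_neg_add_one_eq_zero N⟩
  rw [show 2 * N = N * (2 * 1) by ring]
  exact hu.int_even_mul_periodic N ℓ

theorem dd_apply (hu : Antiperiodic u 1) (N ℓ : ℤ) : Dd N u ℓ = 2 * u ℓ / eps N := by
  rw [Dd, hu.sub_eq]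
  ring

theorem dd (hu : Antiperiodic u 1) (N : ℤ) : Antiperiodic (Dd N u) 1 := by
  intro ℓ
  rw [hu.dd_apply, hu.dd_apply, hu]
  ring

end Function.Antiperiodic

theorem nrm2_eq_of_sq_eq {N : ℤ} (hN : 0 < N) {v : ℤ → ℝ} {a : ℝ} (hv : ∀ ℓ, v ℓ ^ 2 = a) :
    nrm2 N v = 2 * a := by
  have hN' : (N : ℝ) ≠ 0 := by exact_mod_cast hN.ne'
  rw [nrm2, sum_congr rfl fun ℓ _ => hv ℓ, sum_const, nsmul_eq_mul,
    card_Icc_neg_add_one N hN.le, eps]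
  field_simp

theorem Qa_eq_of_antiperiodic {N : ℤ} {u : ℤ → ℝ} (pF p2F rF r2F rrF rr2F g1 g2 : ℝ)
    (hu : Function.Antiperiodic (Dd N u) 1) :
    Qa N pF p2F rF r2F rrF rr2F g1 g2 u = (pF + 2 * g1 * rrF) * nrm2 N (Dd N u) := by
  rw [Qa, nrm2, mul_left_comm]
  congr 1
  rw [mul_sum]
  refine sum_congr rfl fun ℓ _ => ?_
  rw [show ℓ + 2 = ℓ + 1 + 1 by ring, hu (ℓ + 1), hu ℓ, hu.sub_eq ℓ]
  ring

/-- the atomistic model can be less stable than the local QC model. -/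
theorem atomistic_less_stable_than_qcl (N : ℤ) (hN : 1 ≤ N)
    (pF p2F rF r2F rrF rr2F g1 g2 : ℝ)
    (h : 0 < p2F + g2*(rF + 2*r2F)^2 + 2*g1*rr2F) :
    (∃ u : ℤ → ℝ, InU N u ∧ nrm2 N (Dd N u) = 1 ∧
      Qa N pF p2F rF r2F rrF rr2F g1 g2 u < AFc pF p2F rF r2F rrF rr2F g1 g2) ∧
    InU N (fun ℓ : ℤ => (-1:ℝ)^ℓ * eps N / (2 * Real.sqrt 2)) ∧
    nrm2 N (Dd N (fun ℓ : ℤ => (-1:ℝ)^ℓ * eps N / (2 * Real.sqrt 2))) = 1 ∧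
    Qa N pF p2F rF r2F rrF rr2F g1 g2 (fun ℓ : ℤ => (-1:ℝ)^ℓ * eps N / (2 * Real.sqrt 2)) = pF + 2*g1*rrF ∧
    pF + 2*g1*rrF
      = AFc pF p2F rF r2F rrF rr2F g1 g2
        - 4*(p2F + g2*(rF + 2*r2F)^2 + 2*g1*rr2F) ∧
    pF + 2*g1*rrF < AFc pF p2F rF r2F rrF rr2F g1 g2 := by
  set ũ : ℤ → ℝ := fun ℓ => (-1 : ℝ) ^ ℓ * eps N / (2 * Real.sqrt 2)
  have hanti : Function.Antiperiodic ũ 1 := by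
    intro ℓ
    simp only [ũ, mul_div_assoc]
    exact antiperiodic_neg_one_zpow_mul _ ℓ
  have hU : InU N ũ := hanti.inU N
  have hnorm : nrm2 N (Dd N ũ) = 1 := by
    have heps : eps N ≠ 0 := one_div_ne_zero (by exact_mod_cast (by omega : N ≠ 0))
    have hDd : ∀ ℓ, Dd N ũ ℓ = (-1) ^ ℓ / Real.sqrt 2 := fun ℓ => by
      rw [hanti.dd_apply]
      simp only [ũ]
      field_simp
    have hsq : ∀ ℓ, Dd N ũ ℓ ^ 2 = 1 / 2 := fun ℓ => by
      rw [hDd, div_pow, neg_one_zpow_sq, Real.sq_sqrt zero_le_two]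
    rw [nrm2_eq_of_sq_eq (by omega) hsq]
    norm_num
  have hQ : Qa N pF p2F rF r2F rrF rr2F g1 g2 ũ = pF + 2 * g1 * rrF := by
    rw [Qa_eq_of_antiperiodic pF p2F rF r2F rrF rr2F g1 g2 (hanti.dd N), hnorm, mul_one]
  have hA : pF + 2 * g1 * rrF
      = AFc pF p2F rF r2F rrF rr2F g1 g2 - 4 * (p2F + g2 * (rF + 2 * r2F) ^ 2 + 2 * g1 * rr2F) := by
    rw [AFc, Ahat, Atil]
    ring
  have hlt : pF + 2 * g1 * rrF < AFc pF p2F rF r2F rrF rr2F g1 g2 := by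
    rw [hA]
    linarith
  exact ⟨⟨ũ, hU, hnorm, hQ ▸ hlt⟩, hU, hnorm, hQ, hA, hlt⟩
end
end
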